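/- arXiv:1702.04838 — 7 statements merged into one kernel-verified Lean document; each statement's English description precedes it below -/
import Mathlib

section
/- If μ ≥ 2, then g has a periodic orbit of exact period 3: there exists x ∈ [ν − 1, ν] with g(x) ∈ [ν − 1, ν], g(g(x)) ∈ [ν − 1, ν], g³(x) = x, and g(x) ≠ x. -/
open Set

/-- The piecewise-linear threshold map `g(1,1,·)` of the chaotic NOR gate,
with `ν = 1/(1+μ)`. -/
noncomputable def gmap (μ : ℝ) : ℝ → ℝ := fun x =>
  let ν : ℝ := 1 / (1 + μ)
  if x ≤ ν - 1 / 2 then ν - 1 + μ * (1 + x - ν) else ν - 1 + μ * (ν - x)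

/-- For `μ ≥ 2`, `g` has a periodic orbit of exact period 3 in `[ν − 1, ν]`. -/
theorem gmap_exists_period_three (μ : ℝ) (hμ : 2 ≤ μ) (ν : ℝ) (hν : ν = 1 / (1 + μ)) :
    ∃ x ∈ Icc (ν - 1) ν,
      gmap μ x ∈ Icc (ν - 1) ν ∧
      gmap μ (gmap μ x) ∈ Icc (ν - 1) ν ∧
      (gmap μ)^[3] x = x ∧
      gmap μ x ≠ x := by
  have hμ0 : (0:ℝ) < 1 + μ := by linarith
  have hd : (0:ℝ) < 1 + μ ^ 3 := by nlinarith [sq_nonneg (μ-2), sq_nonneg μ]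
  set a : ℝ := μ / (1 + μ ^ 3) with ha
  set b : ℝ := μ ^ 2 / (1 + μ ^ 3) with hb
  set c : ℝ := μ ^ 3 / (1 + μ ^ 3) with hc
  have ha2 : a ≤ 1 / 2 := by
    rw [ha, div_le_iff₀ hd]; nlinarith
  have hb2 : b ≤ 1 / 2 := by
    rw [hb, div_le_iff₀ hd]; nlinarith
  have hc2 : ¬ (c ≤ 1 / 2) := by
    rw [hc]; push_neg; rw [lt_div_iff₀ hd]; nlinarith
  have ha0 : 0 < a := by positivity
  have hb0 : 0 < b := by positivity
  have hc1 : c ≤ 1 := by rw [hc, div_le_one hd]; nlinarith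
  -- evaluate gmap at the three points
  have g1 : gmap μ (ν - 1 + a) = ν - 1 + b := by
    simp only [gmap, hν]
    rw [if_pos (by linarith)]
    rw [hb, ha]; field_simp; ring
  have g2 : gmap μ (ν - 1 + b) = ν - 1 + c := by
    simp only [gmap, hν]
    rw [if_pos (by linarith)]
    rw [hb, hc]; field_simp; ring
  have g3 : gmap μ (ν - 1 + c) = ν - 1 + a := by
    simp only [gmap, hν]
    rw [if_neg (by intro h; exact hc2 (by linarith))]
    rw [ha, hc]; field_simp; ring
  refine ⟨ν - 1 + a, ⟨by linarith, by linarith [ha2]⟩, ?_, ?_, ?_, ?_⟩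
  · rw [g1]; exact ⟨by linarith, by linarith [hb2]⟩
  · rw [g1, g2]; exact ⟨by linarith, by linarith⟩
  · show gmap μ (gmap μ (gmap μ (ν - 1 + a))) = ν - 1 + a
    rw [g1, g2, g3]
  · rw [g1]
    intro h
    have hab : a = b := by linarith
    rw [ha, hb, div_eq_div_iff hd.ne' hd.ne'] at hab
    nlinarith [hd, sq_nonneg μ, mul_pos hd hd]
end

section
/- If μ ≥ 2, then for every positive integer n the map g has a point of least period n: there exists p ∈ [ν − 1, ν] whose entire forward orbit under g stays in [ν − 1, ν], with gⁿ(p) = p and gᵏ(p) ≠ p for every integer k with 0 < k < n. -/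
open Set

/-- For `μ ≥ 2`, for every positive integer `n` the map `g` has a point of least
period `n` whose forward orbit stays in `[ν − 1, ν]`. -/
theorem gmap_exists_least_period (μ : ℝ) (hμ : 2 ≤ μ) (ν : ℝ) (hν : ν = 1 / (1 + μ)) :
    ∀ n : ℕ, 0 < n →
      ∃ p ∈ Icc (ν - 1) ν,
        (∀ k : ℕ, (gmap μ)^[k] p ∈ Icc (ν - 1) ν) ∧
        (gmap μ)^[n] p = p ∧
        ∀ k : ℕ, 0 < k → k < n → (gmap μ)^[k] p ≠ p := by
  intro n hn
  have hμ1 : (1:ℝ) < μ := lt_of_lt_of_le one_lt_two hμ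
  have hμ0 : (0:ℝ) < μ := lt_trans one_pos hμ1
  have hD : (0:ℝ) < μ ^ n + 1 := by positivity
  have hDne : (μ ^ n + 1) ≠ 0 := ne_of_gt hD
  set D : ℝ := μ ^ n + 1 with hDdef
  set p : ℝ := ν - 1 + μ / D with hpdef
  -- branch formulas
  have gL : ∀ x : ℝ, x ≤ ν - 1/2 → gmap μ x = ν - 1 + μ * (1 + x - ν) := by
    intro x hx
    simp only [gmap, ← hν]
    rw [if_pos hx]
  have gR : ∀ x : ℝ, ν - 1/2 < x → gmap μ x = ν - 1 + μ * (ν - x) := by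
    intro x hx
    simp only [gmap, ← hν]
    rw [if_neg (not_le.mpr hx)]
  -- the orbit formula for k < n
  have key : ∀ k, k < n → (gmap μ)^[k] p = ν - 1 + μ ^ (k+1) / D := by
    intro k
    induction k with
    | zero => intro _; simp [hpdef]
    | succ k ih =>
      intro hk
      have hk' : k < n := Nat.lt_of_succ_lt hk
      rw [Function.iterate_succ_apply', ih hk']
      have hle : μ ^ (k+2) ≤ μ ^ n := pow_le_pow_right₀ (le_of_lt hμ1) (by omega)
      have h2 : 2 * μ ^ (k+1) ≤ μ ^ (k+2) := by
        have : 2 * μ ^ (k+1) ≤ μ * μ ^ (k+1) := by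
          have := pow_pos hμ0 (k+1); nlinarith
        calc 2 * μ ^ (k+1) ≤ μ * μ ^ (k+1) := this
          _ = μ ^ (k+2) := by ring
      have hx : ν - 1 + μ ^ (k+1) / D ≤ ν - 1/2 := by
        have h3 : μ ^ (k+1) / D ≤ 1/2 := by
          rw [div_le_iff₀ hD]
          simp only [hDdef]
          nlinarith
        linarith
      rw [gL _ hx]
      field_simp
      ring
  have hlast : (gmap μ)^[n] p = p := by
    obtain ⟨m, rfl⟩ : ∃ m, n = m + 1 := ⟨n - 1, by omega⟩
    rw [Function.iterate_succ_apply', key m (Nat.lt_succ_self m)]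
    have h1 : (1:ℝ) < μ ^ (m+1) := one_lt_pow₀ hμ1 (by omega)
    have hx : ν - 1/2 < ν - 1 + μ ^ (m+1) / D := by
      have : (1:ℝ)/2 < μ ^ (m+1) / D := by
        rw [div_lt_div_iff₀ (by norm_num : (0:ℝ) < 2) hD]
        simp only [hDdef]
        nlinarith
      linarith
    rw [gR _ hx, hpdef]
    have : D = μ ^ (m+1) + 1 := by rw [hDdef]
    field_simp
    ring
  have hper : Function.IsPeriodicPt (gmap μ) n p := hlast
  have hmemq : ∀ k, k < n → (ν - 1 + μ ^ (k+1) / D) ∈ Icc (ν - 1) ν := by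
    intro k hk
    constructor
    · have : 0 ≤ μ ^ (k+1) / D := by positivity
      linarith
    · have h1 : μ ^ (k+1) ≤ μ ^ n := pow_le_pow_right₀ (le_of_lt hμ1) (by omega)
      have : μ ^ (k+1) / D ≤ 1 := by
        rw [div_le_one hD]; simp only [hDdef]; linarith
      linarith
  have hmem : ∀ k : ℕ, (gmap μ)^[k] p ∈ Icc (ν - 1) ν := by
    intro k
    have hmod : k % n < n := Nat.mod_lt _ hn
    rw [← hper.iterate_mod_apply k, key _ hmod]
    exact hmemq _ hmod
  refine ⟨p, ?_, hmem, hlast, ?_⟩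
  · have := hmem 0; simpa using this
  · intro k hk0 hkn hEq
    rw [key k hkn, hpdef] at hEq
    have heq : μ ^ (k+1) / D = μ / D := by linarith
    have heq2 : μ ^ (k+1) = μ := by
      field_simp at heq; linarith
    have : μ ^ 1 < μ ^ (k+1) := pow_lt_pow_right₀ hμ1 (by omega)
    rw [pow_one] at this
    linarith
end

section
/- If μ ≥ 2, then g is chaotic in the sense of Li and Yorke: there exists an uncountable set S ⊆ [ν − 1, ν] containing no periodic points of g such that for all p, q ∈ S with p ≠ q, limsup_{n→∞} |gⁿ(p) − gⁿ(q)| > 0 and liminf_{n→∞} |gⁿ(p) − gⁿ(q)| = 0. -/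
open Set Filter

/-!
Translation by `ν - 1` conjugates `g` to the tent map `T y = μ * min y (1 - y)`. The inverse
branches `y ↦ y / μ` and `y ↦ 1 - y / μ` of `T` contract `[0, 1]` by a factor `≤ 1/2`, so every
sequence `s : ℕ → Bool` is the itinerary of a point `x s ∈ [0, 1]`, on which `T` acts as the shift.
Points whose itineraries agree for `m` steps are `2⁻ᵐ`-close, while an itinerary starting with
`1` and one starting with `0 0` give points at least `1/4` apart. Every `α : ℕ → Bool` is encoded
into an itinerary that contains arbitrarily long blocks `1 0ᵐ` at the same places for all `α`, and
each pair `αᵢ αᵢ` infinitely often, again at places independent of `α`. The resulting points form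
an uncountable scrambled set, and the blocks `1 0ᵐ` rule out periodic points.
-/

open Function Metric Topology
open scoped NNReal

theorem not_countable_range_of_injective {α β : Type*} [Uncountable α] {f : α → β}
    (hf : Injective f) : ¬ (range f).Countable :=
  fun h => not_countable_univ <|
    countable_of_injective_of_countable_image hf.injOn (by rwa [image_univ])

instance : Uncountable (ℕ → Bool) := by
  rw [← Cardinal.aleph0_lt_mk_iff]; simpa using Cardinal.aleph0_lt_continuum

theorem Filter.liminf_eq_zero_of_frequently_le {ι : Type*} {f : Filter ι} {u : ι → ℝ}
    (h₀ : ∀ᶠ i in f, 0 ≤ u i) (h : ∀ ε > 0, ∃ᶠ i in f, u i ≤ ε) : liminf u f = 0 :=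
  le_antisymm
    (le_of_forall_gt_imp_ge_of_dense fun ε hε =>
      liminf_le_of_frequently_le (h ε hε) (isBoundedUnder_of_eventually_ge h₀))
    (le_liminf_of_le (IsCoboundedUnder.of_frequently_le (h 1 one_pos)) h₀)

def IsLiYorkePair (f : ℝ → ℝ) (p q : ℝ) : Prop :=
  0 < limsup (fun n : ℕ => |f^[n] p - f^[n] q|) atTop ∧
    liminf (fun n : ℕ => |f^[n] p - f^[n] q|) atTop = 0

theorem IsLiYorkePair.add_const {f g : ℝ → ℝ} {c p q : ℝ} (h : Semiconj (· + c) f g)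
    (hpq : IsLiYorkePair f p q) : IsLiYorkePair g (p + c) (q + c) := by
  have hdist (n : ℕ) : |g^[n] (p + c) - g^[n] (q + c)| = |f^[n] p - f^[n] q| := by
    rw [← (h.iterate_right n).eq, ← (h.iterate_right n).eq, add_sub_add_right_eq_sub]
  simpa only [IsLiYorkePair, hdist] using hpq

section IteratedFunctionSystem

variable {X ι : Type*}

def composeBranches (B : ι → X → X) (s : ℕ → ι) : ℕ → X → X
  | 0 => id
  | n + 1 => composeBranches B s n ∘ B (s n)

theorem composeBranches_succ' (B : ι → X → X) (s : ℕ → ι) (n : ℕ) :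
    composeBranches B s (n + 1) = B (s 0) ∘ composeBranches B (fun k => s (k + 1)) n := by
  induction n with
  | zero => rfl
  | succ n ih => rw [composeBranches, ih]; rfl

variable [MetricSpace X]

structure IsContractingIFS (B : ι → X → X) (K : ℝ≥0) (C : Set X) : Prop where
  lipschitzWith : ∀ i, LipschitzWith K (B i)
  lt_one : K < 1
  isClosed : IsClosed C
  isBounded : Bornology.IsBounded C
  mapsTo : ∀ i, MapsTo (B i) C C

noncomputable def codingPoint (B : ι → X → X) (x₀ : X) (s : ℕ → ι) : X :=
  haveI : Nonempty X := ⟨x₀⟩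
  limUnder atTop fun n => composeBranches B s n x₀

namespace IsContractingIFS

variable {B : ι → X → X} {K : ℝ≥0} {C : Set X} {x₀ : X}

theorem lipschitzWith_composeBranches (h : IsContractingIFS B K C) (s : ℕ → ι) :
    ∀ n, LipschitzWith (K ^ n) (composeBranches B s n)
  | 0 => LipschitzWith.id.weaken (pow_zero K).ge
  | n + 1 => pow_succ K n ▸ (h.lipschitzWith_composeBranches s n).comp (h.lipschitzWith _)

theorem mapsTo_composeBranches (h : IsContractingIFS B K C) (s : ℕ → ι) :
    ∀ n, MapsTo (composeBranches B s n) C C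
  | 0 => mapsTo_id C
  | n + 1 => (h.mapsTo_composeBranches s n).comp (h.mapsTo _)

theorem cauchySeq_composeBranches (h : IsContractingIFS B K C) (hx₀ : x₀ ∈ C) (s : ℕ → ι) :
    CauchySeq fun n => composeBranches B s n x₀ := by
  refine cauchySeq_of_le_geometric K (diam C) h.lt_one fun n => ?_
  calc dist (composeBranches B s n x₀) (composeBranches B s n (B (s n) x₀))
      ≤ K ^ n * dist x₀ (B (s n) x₀) := by
        simpa using (h.lipschitzWith_composeBranches s n).dist_le_mul x₀ (B (s n) x₀)
    _ ≤ K ^ n * diam C := by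
        gcongr; exact dist_le_diam_of_mem h.isBounded hx₀ (h.mapsTo _ hx₀)
    _ = diam C * K ^ n := mul_comm _ _

variable [CompleteSpace X]

theorem tendsto_codingPoint (h : IsContractingIFS B K C) (hx₀ : x₀ ∈ C) (s : ℕ → ι) :
    Tendsto (fun n => composeBranches B s n x₀) atTop (𝓝 (codingPoint B x₀ s)) :=
  (h.cauchySeq_composeBranches hx₀ s).tendsto_limUnder

theorem codingPoint_mem (h : IsContractingIFS B K C) (hx₀ : x₀ ∈ C) (s : ℕ → ι) :
    codingPoint B x₀ s ∈ C :=
  h.isClosed.mem_of_tendsto (h.tendsto_codingPoint hx₀ s)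
    (Eventually.of_forall fun n => h.mapsTo_composeBranches s n hx₀)

theorem codingPoint_eq (h : IsContractingIFS B K C) (hx₀ : x₀ ∈ C) (s : ℕ → ι) :
    codingPoint B x₀ s = B (s 0) (codingPoint B x₀ fun k => s (k + 1)) := by
  refine tendsto_nhds_unique ((h.tendsto_codingPoint hx₀ s).comp (tendsto_add_atTop_nat 1)) ?_
  simp only [comp_def, composeBranches_succ']
  exact ((h.lipschitzWith _).continuous.tendsto _).comp (h.tendsto_codingPoint hx₀ _)

theorem dist_codingPoint_le (h : IsContractingIFS B K C) (hx₀ : x₀ ∈ C) {m : ℕ} {s t : ℕ → ι}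
    (hst : ∀ k < m, s k = t k) :
    dist (codingPoint B x₀ s) (codingPoint B x₀ t) ≤ K ^ m * diam C := by
  induction m generalizing s t with
  | zero =>
    simpa using dist_le_diam_of_mem h.isBounded (h.codingPoint_mem hx₀ s) (h.codingPoint_mem hx₀ t)
  | succ m ih =>
    rw [h.codingPoint_eq hx₀ s, h.codingPoint_eq hx₀ t, hst 0 m.succ_pos]
    calc _ ≤ K * dist (codingPoint B x₀ fun k => s (k + 1)) (codingPoint B x₀ fun k => t (k + 1)) :=
          (h.lipschitzWith _).dist_le_mul _ _
      _ ≤ K * (K ^ m * diam C) := by gcongr; exact ih fun k hk => hst (k + 1) (by omega)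
      _ = K ^ (m + 1) * diam C := by ring

end IsContractingIFS
end IteratedFunctionSystem

section TentMap

noncomputable def tentMap (μ y : ℝ) : ℝ := if y ≤ 1 / 2 then μ * y else μ * (1 - y)

noncomputable def tentBranch (μ : ℝ) (b : Bool) (y : ℝ) : ℝ := if b then 1 - y / μ else y / μ

noncomputable def tentPoint (μ : ℝ) (s : ℕ → Bool) : ℝ := codingPoint (tentBranch μ) 0 s

variable {μ : ℝ}

theorem dist_tentBranch (b : Bool) (y z : ℝ) :
    dist (tentBranch μ b y) (tentBranch μ b z) = dist y z / |μ| := by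
  cases b
  · simp only [tentBranch, Real.dist_eq, Bool.false_eq_true, if_false, ← sub_div, abs_div]
  · simp only [tentBranch, Real.dist_eq, if_true, sub_sub_sub_cancel_left, ← sub_div, abs_div,
      abs_sub_comm z y]

theorem isContractingIFS_tentBranch (hμ : 2 ≤ μ) :
    IsContractingIFS (tentBranch μ) 2⁻¹ (Icc 0 1) where
  lipschitzWith b := LipschitzWith.of_dist_le_mul fun y z => by
    rw [dist_tentBranch, abs_of_pos (by linarith), NNReal.coe_inv, NNReal.coe_ofNat,
      div_eq_inv_mul]
    gcongr
  lt_one := by norm_num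
  isClosed := isClosed_Icc
  isBounded := Metric.isBounded_Icc 0 1
  mapsTo b y hy := by
    have : y / μ ≤ 1 / 2 := by rw [div_le_iff₀ (by linarith)]; nlinarith [hy.2]
    have : 0 ≤ y / μ := div_nonneg hy.1 (by linarith)
    cases b <;> simp only [tentBranch, Bool.false_eq_true, if_true, if_false, mem_Icc] <;>
      constructor <;> linarith

theorem tentMap_tentBranch (hμ : 2 ≤ μ) (b : Bool) {y : ℝ} (hy : y ∈ Icc 0 1) :
    tentMap μ (tentBranch μ b y) = y := by
  have hμ0 : μ ≠ 0 := (show (0 : ℝ) < μ by linarith).ne'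
  have : y / μ ≤ 1 / 2 := by rw [div_le_iff₀ (by linarith)]; nlinarith [hy.2]
  cases b
  · simp only [tentMap, tentBranch, Bool.false_eq_true, if_false, if_pos this]
    field_simp
  · simp only [tentMap, tentBranch, if_true]
    split_ifs with h
    · have : y = μ / 2 := by field_simp at h this ⊢; linarith
      field_simp; linarith
    · field_simp; ring

theorem tentPoint_mem (hμ : 2 ≤ μ) (s : ℕ → Bool) : tentPoint μ s ∈ Icc 0 1 :=
  (isContractingIFS_tentBranch hμ).codingPoint_mem (by simp) s

theorem tentPoint_eq (hμ : 2 ≤ μ) (s : ℕ → Bool) :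
    tentPoint μ s = tentBranch μ (s 0) (tentPoint μ fun k => s (k + 1)) :=
  (isContractingIFS_tentBranch hμ).codingPoint_eq (by simp) s

theorem tentMap_iterate_tentPoint (hμ : 2 ≤ μ) (n : ℕ) (s : ℕ → Bool) :
    (tentMap μ)^[n] (tentPoint μ s) = tentPoint μ fun k => s (k + n) := by
  induction n generalizing s with
  | zero => rfl
  | succ n ih =>
    rw [iterate_succ_apply, tentPoint_eq hμ s, tentMap_tentBranch hμ _ (tentPoint_mem hμ _), ih]
    simp only [add_assoc]

theorem abs_tentPoint_sub_le (hμ : 2 ≤ μ) {m : ℕ} {s t : ℕ → Bool} (hst : ∀ k < m, s k = t k) :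
    |tentPoint μ s - tentPoint μ t| ≤ 2⁻¹ ^ m := by
  simpa [tentPoint, Real.dist_eq, Real.diam_Icc] using
    (isContractingIFS_tentBranch hμ).dist_codingPoint_le (x₀ := 0) (by simp) hst

theorem quarter_le_abs_tentPoint_sub (hμ : 2 ≤ μ) {s t : ℕ → Bool} (hs₀ : s 0 = false)
    (hs₁ : s 1 = false) (ht₀ : t 0 = true) : 1 / 4 ≤ |tentPoint μ s - tentPoint μ t| := by
  have hμ0 : 0 < μ := by linarith
  have hs : tentPoint μ s ≤ 1 / 4 := by
    rw [tentPoint_eq hμ, tentPoint_eq hμ (fun k => s (k + 1))]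
    simp only [tentBranch, hs₀, hs₁, zero_add, Bool.false_eq_true, if_false]
    have := (tentPoint_mem hμ fun k => s (k + 1 + 1)).2
    rw [div_div, div_le_iff₀ (by positivity)]
    nlinarith
  have ht : 1 / 2 ≤ tentPoint μ t := by
    rw [tentPoint_eq hμ t]
    simp only [tentBranch, ht₀, if_true]
    have := (tentPoint_mem hμ fun k => t (k + 1)).2
    have : (tentPoint μ fun k => t (k + 1)) / μ ≤ 1 / 2 := by
      rw [div_le_iff₀ hμ0]; linarith
    linarith
  rw [abs_sub_comm]
  exact le_abs.mpr (Or.inl (by linarith))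

theorem quarter_le_abs_tentPoint_sub_of_ne (hμ : 2 ≤ μ) {s t : ℕ → Bool}
    (hs : s 0 = s 1) (ht : t 0 = t 1) (hst : s 0 ≠ t 0) :
    1 / 4 ≤ |tentPoint μ s - tentPoint μ t| := by
  cases h : s 0
  · exact quarter_le_abs_tentPoint_sub hμ h (hs ▸ h) (by simpa [h] using hst.symm)
  · rw [abs_sub_comm]
    exact quarter_le_abs_tentPoint_sub hμ (by simpa [h] using hst.symm)
      (by simpa [h, ← ht] using hst.symm) h

end TentMap

theorem gmap_semiconj_tentMap (μ : ℝ) :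
    Semiconj (· + (1 / (1 + μ) - 1)) (tentMap μ) (gmap μ) := by
  intro y
  simp only [gmap, tentMap]
  by_cases hy : y ≤ 1 / 2
  · rw [if_pos hy, if_pos (by linarith)]; ring
  · rw [if_neg hy, if_neg (by linarith)]; ring

section SymbolicSequence

/-- On the dyadic block `[2^m, 2^(m+1))` the sequence reads `1 0^m α₀ α₀ α₁ α₁ …`. -/
def scrambledSeq (α : ℕ → Bool) (n : ℕ) : Bool :=
  let m := Nat.log 2 n
  let r := n - 2 ^ m
  if r = 0 then true else if r ≤ m then false else α ((r - m - 1) / 2)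

theorem scrambledSeq_add_two_pow (α : ℕ → Bool) {m r : ℕ} (hr : r < 2 ^ m) :
    scrambledSeq α (r + 2 ^ m) =
      if r = 0 then true else if r ≤ m then false else α ((r - m - 1) / 2) := by
  have hlog : Nat.log 2 (r + 2 ^ m) = m :=
    Nat.log_eq_of_pow_le_of_lt_pow (Nat.le_add_left _ _) (by rw [pow_succ]; omega)
  simp only [scrambledSeq, hlog, Nat.add_sub_cancel]

theorem frequently_scrambledSeq_eq_decide (m : ℕ) :
    ∃ᶠ n in atTop, ∀ α : ℕ → Bool, ∀ k ≤ m, scrambledSeq α (k + n) = decide (k = 0) := by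
  refine frequently_atTop.mpr fun N => ⟨2 ^ (N + m), ?_, fun α k hk => ?_⟩
  · exact (Nat.lt_two_pow_self).le.trans (Nat.pow_le_pow_right two_pos (Nat.le_add_right N m))
  · have := Nat.lt_two_pow_self (n := N + m)
    rw [scrambledSeq_add_two_pow α (by omega)]
    split_ifs <;> simp_all; omega

theorem frequently_scrambledSeq_eq_pair (i : ℕ) :
    ∃ᶠ n in atTop, ∀ α : ℕ → Bool, scrambledSeq α n = α i ∧ scrambledSeq α (n + 1) = α i := by
  refine frequently_atTop.mpr fun N =>
    ⟨(N + 4 * i + 4) + 2 ^ (N + 2 * i + 3), Nat.le_add_right_of_le (by omega), fun α => ?_⟩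
  -- the pair `α i α i` sits at offsets `m + 2i + 1`, `m + 2i + 2` of the block `m = N + 2i + 3`
  have := Nat.lt_two_pow_self (n := N + 2 * i + 2)
  have hpow : 2 ^ (N + 2 * i + 3) = 2 * 2 ^ (N + 2 * i + 2) := by rw [pow_succ]; ring
  rw [show N + 4 * i + 4 + 2 ^ (N + 2 * i + 3) + 1 = N + 4 * i + 5 + 2 ^ (N + 2 * i + 3) by ring,
    scrambledSeq_add_two_pow α (by omega), scrambledSeq_add_two_pow α (by omega),
    if_neg (by omega), if_neg (by omega), if_neg (by omega), if_neg (by omega),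
    show (N + 4 * i + 4 - (N + 2 * i + 3) - 1) / 2 = i by omega,
    show (N + 4 * i + 5 - (N + 2 * i + 3) - 1) / 2 = i by omega]
  exact ⟨rfl, rfl⟩

end SymbolicSequence

section Orbits

variable {μ : ℝ}

theorem frequently_quarter_le_abs_tentMap_iterate_sub (hμ : 2 ≤ μ) {α β : ℕ → Bool}
    (hαβ : α ≠ β) :
    ∃ᶠ n in atTop, 1 / 4 ≤ |(tentMap μ)^[n] (tentPoint μ (scrambledSeq α)) -
      (tentMap μ)^[n] (tentPoint μ (scrambledSeq β))| := by
  obtain ⟨i, hi⟩ := Function.ne_iff.mp hαβ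
  refine (frequently_scrambledSeq_eq_pair i).mono fun n hn => ?_
  obtain ⟨⟨hα₀, hα₁⟩, ⟨hβ₀, hβ₁⟩⟩ := And.intro (hn α) (hn β)
  simp only [tentMap_iterate_tentPoint hμ]
  refine quarter_le_abs_tentPoint_sub_of_ne hμ ?_ ?_ ?_ <;> simp only [zero_add, add_comm 1 n]
  · rw [hα₀, hα₁]
  · rw [hβ₀, hβ₁]
  · rwa [hα₀, hβ₀]

theorem frequently_abs_tentMap_iterate_sub_le (hμ : 2 ≤ μ) (α β : ℕ → Bool) (m : ℕ) :
    ∃ᶠ n in atTop, |(tentMap μ)^[n] (tentPoint μ (scrambledSeq α)) -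
      (tentMap μ)^[n] (tentPoint μ (scrambledSeq β))| ≤ 2⁻¹ ^ m :=
  (frequently_scrambledSeq_eq_decide m).mono fun n hn => by
    simp only [tentMap_iterate_tentPoint hμ]
    exact abs_tentPoint_sub_le hμ fun k hk => (hn α k hk.le).trans (hn β k hk.le).symm

theorem tentMap_iterate_tentPoint_ne (hμ : 2 ≤ μ) (α : ℕ → Bool) {k : ℕ} (hk : 0 < k) :
    (tentMap μ)^[k] (tentPoint μ (scrambledSeq α)) ≠ tentPoint μ (scrambledSeq α) := by
  intro hper
  obtain ⟨n, hn⟩ := (frequently_scrambledSeq_eq_decide (k + 1)).exists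
  have hper' : (tentMap μ)^[n + k] (tentPoint μ (scrambledSeq α)) =
      (tentMap μ)^[n] (tentPoint μ (scrambledSeq α)) := by
    rw [iterate_add_apply, hper]
  rw [tentMap_iterate_tentPoint hμ, tentMap_iterate_tentPoint hμ] at hper'
  -- at time `n + k` the itinerary reads `0 0`, at time `n` it reads `1`
  have hsep := quarter_le_abs_tentPoint_sub hμ (s := fun j => scrambledSeq α (j + (n + k)))
    (t := fun j => scrambledSeq α (j + n))
    (by rw [zero_add, add_comm, hn α k (by omega)]; simp [hk.ne'])
    (by rw [show 1 + (n + k) = k + 1 + n by ring, hn α (k + 1) le_rfl]; simp)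
    (by rw [hn α 0 (by omega)]; rfl)
  rw [hper', sub_self, abs_zero] at hsep
  norm_num at hsep

theorem abs_tentMap_iterate_sub_le_one (hμ : 2 ≤ μ) (α β : ℕ → Bool) (n : ℕ) :
    |(tentMap μ)^[n] (tentPoint μ (scrambledSeq α)) -
      (tentMap μ)^[n] (tentPoint μ (scrambledSeq β))| ≤ 1 := by
  simp only [tentMap_iterate_tentPoint hμ]
  have hα := tentPoint_mem hμ fun k => scrambledSeq α (k + n)
  have hβ := tentPoint_mem hμ fun k => scrambledSeq β (k + n)
  rw [abs_le]
  constructor <;> linarith [hα.1, hα.2, hβ.1, hβ.2]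

theorem tentPoint_scrambledSeq_injective (hμ : 2 ≤ μ) :
    Injective fun α => tentPoint μ (scrambledSeq α) := fun α β (hαβ : tentPoint μ _ = _) => by
  by_contra hne
  obtain ⟨n, hn⟩ := (frequently_quarter_le_abs_tentMap_iterate_sub hμ hne).exists
  rw [hαβ, sub_self, abs_zero] at hn
  norm_num at hn

theorem isLiYorkePair_tentPoint_scrambledSeq (hμ : 2 ≤ μ) {α β : ℕ → Bool} (hαβ : α ≠ β) :
    IsLiYorkePair (tentMap μ) (tentPoint μ (scrambledSeq α)) (tentPoint μ (scrambledSeq β)) := by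
  refine ⟨?_, liminf_eq_zero_of_frequently_le (.of_forall fun n => abs_nonneg _) fun ε hε => ?_⟩
  · exact one_div_pos.mpr four_pos |>.trans_le <|
      le_limsup_of_frequently_le (frequently_quarter_le_abs_tentMap_iterate_sub hμ hαβ)
        (isBoundedUnder_of ⟨1, abs_tentMap_iterate_sub_le_one hμ α β⟩)
  · obtain ⟨m, hm⟩ := exists_pow_lt_of_lt_one hε (by norm_num : (2⁻¹ : ℝ) < 1)
    exact (frequently_abs_tentMap_iterate_sub_le hμ α β m).mono fun n hn => hn.trans hm.le

end Orbits

/-- For `μ ≥ 2`, `g` is chaotic in the sense of Li and Yorke: there is an uncountable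
scrambled set `S ⊆ [ν − 1, ν]` containing no periodic points. -/
theorem gmap_liYorke_chaos (μ : ℝ) (hμ : 2 ≤ μ) (ν : ℝ) (hν : ν = 1 / (1 + μ)) :
    ∃ S : Set ℝ, S ⊆ Icc (ν - 1) ν ∧ ¬ S.Countable ∧
      (∀ p ∈ S, ¬ ∃ n : ℕ, 0 < n ∧ (gmap μ)^[n] p = p) ∧
      ∀ p ∈ S, ∀ q ∈ S, p ≠ q →
        0 < limsup (fun n : ℕ => |(gmap μ)^[n] p - (gmap μ)^[n] q|) atTop ∧
        liminf (fun n : ℕ => |(gmap μ)^[n] p - (gmap μ)^[n] q|) atTop = 0 := by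
  subst hν
  have hconj := gmap_semiconj_tentMap μ
  refine ⟨range fun α => tentPoint μ (scrambledSeq α) + (1 / (1 + μ) - 1), ?_, ?_, ?_, ?_⟩
  · rintro _ ⟨α, rfl⟩
    have := tentPoint_mem hμ (scrambledSeq α)
    constructor <;> linarith [this.1, this.2]
  · exact not_countable_range_of_injective
      ((add_left_injective _).comp (tentPoint_scrambledSeq_injective hμ))
  · rintro _ ⟨α, rfl⟩ ⟨k, hk, hper⟩
    exact tentMap_iterate_tentPoint_ne hμ α hk
      (add_left_injective _ (((hconj.iterate_right k).eq _).trans hper))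
  · rintro _ ⟨α, rfl⟩ _ ⟨β, rfl⟩ hne
    exact (isLiYorkePair_tentPoint_scrambledSeq hμ fun h => hne (by rw [h])).add_const hconj
end

section
/- If μ > 2, then the set Λ of points of [ν − 1, ν] whose forward orbit under g never leaves [ν − 1, ν] is a Cantor set: Λ is nonempty, compact, perfect (has no isolated points), and totally disconnected; equivalently, Λ is homeomorphic to the Cantor space of infinite binary sequences. -/
open Set

/-!
For `μ > 2` the map `g` has two inverse branches on `I = [ν - 1, ν]`: affine maps `I → I`
contracting by `1/μ`, whose images lie strictly on either side of the turning point
`ν - 1/2`. Composing them along a binary word `s` and passing to the limit gives a point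
`code s` whose itinerary under `g` is `s`; conversely a point of `Λ` is recovered from its
itinerary, since `g` expands distances by `μ` on each side of the turning point. So `code`
is a continuous bijection from the Cantor space `ℕ → Bool` onto `Λ`, hence a homeomorphism,
and `Λ` inherits compactness, perfectness and total disconnectedness from the Cantor space.
-/

open Filter Topology Function Metric NNReal

instance Pi.perfectSpace {ι : Type*} {π : ι → Type*} [Infinite ι]
    [∀ i, TopologicalSpace (π i)] [∀ i, Nontrivial (π i)] : PerfectSpace (∀ i, π i) := by
  classical
  refine ⟨preperfect_iff_nhds.2 fun x _ U hU => ?_⟩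
  let y : ι → ∀ i, π i := fun i => update x i (exists_ne (x i)).choose
  have hy : Tendsto y cofinite (𝓝 x) := tendsto_pi_nhds.2 fun j =>
    tendsto_const_nhds.congr' <| (eventually_cofinite_ne j).mono fun i hij =>
      (update_of_ne hij.symm _ _).symm
  obtain ⟨i, hi⟩ := (hy.eventually_mem hU).exists
  exact ⟨y i, ⟨hi, mem_univ _⟩, fun h =>
    (exists_ne (x i)).choose_spec (by simpa [y] using congrFun h i)⟩

theorem Continuous.preperfect_range {X Y : Type*} [TopologicalSpace X] [TopologicalSpace Y]
    [PerfectSpace X] {f : X → Y} (hf : Continuous f) (hinj : Injective f) :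
    Preperfect (range f) := by
  refine preperfect_iff_nhds.2 ?_
  rintro _ ⟨x, rfl⟩ U hU
  obtain ⟨y, hyU, hyx⟩ := preperfect_iff_nhds.1 PerfectSpace.univ_preperfect x (mem_univ x) _
    (hf.continuousAt hU)
  exact ⟨f y, ⟨hyU.1, mem_range_self y⟩, hinj.ne hyx⟩

def nonEscapingSet {X : Type*} (σ : X → X) (K : Set X) : Set X :=
  {x ∈ K | ∀ n : ℕ, σ^[n] x ∈ K}

theorem mapsTo_nonEscapingSet {X : Type*} (σ : X → X) (K : Set X) :
    MapsTo σ (nonEscapingSet σ K) (nonEscapingSet σ K) :=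
  fun _ hx => ⟨hx.2 1, fun n => hx.2 (n + 1)⟩

def itinerary {X : Type*} (σ : X → X) (bit : X → Bool) (x : X) (n : ℕ) : Bool :=
  bit (σ^[n] x)

/-- Two contractions of a nonempty compact set into itself: an iterated function system on
two symbols. -/
structure ContractingPair (X : Type*) [MetricSpace X] where
  K : Set X
  isCompact : IsCompact K
  nonempty : K.Nonempty
  branch : Bool → X → X
  mapsTo : ∀ b, MapsTo (branch b) K K
  ratio : ℝ≥0
  ratio_lt_one : ratio < 1
  lipschitzWith : ∀ b, LipschitzWith ratio (branch b)

namespace ContractingPair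

variable {X : Type*} [MetricSpace X] (I : ContractingPair X) {σ : X → X} {bit : X → Bool}

noncomputable def approx : ℕ → (ℕ → Bool) → X
  | 0, _ => I.nonempty.some
  | n + 1, s => I.branch (s 0) (approx n fun k => s (k + 1))

noncomputable def code (s : ℕ → Bool) : X :=
  haveI : Nonempty X := ⟨I.nonempty.some⟩
  limUnder atTop (I.approx · s)

theorem approx_mem (n : ℕ) (s : ℕ → Bool) : I.approx n s ∈ I.K := by
  induction n generalizing s with
  | zero => exact I.nonempty.some_mem
  | succ n ih => exact I.mapsTo _ (ih _)

theorem dist_approx_succ_le (n : ℕ) (s : ℕ → Bool) :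
    dist (I.approx n s) (I.approx (n + 1) s) ≤ diam I.K * I.ratio ^ n := by
  induction n generalizing s with
  | zero =>
    simpa using dist_le_diam_of_mem I.isCompact.isBounded (I.approx_mem 0 s) (I.approx_mem 1 s)
  | succ n ih =>
    calc dist (I.approx (n + 1) s) (I.approx (n + 2) s)
        ≤ I.ratio * dist (I.approx n fun k => s (k + 1)) (I.approx (n + 1) fun k => s (k + 1)) :=
          (I.lipschitzWith _).dist_le_mul _ _
      _ ≤ I.ratio * (diam I.K * I.ratio ^ n) := by gcongr; exact ih _
      _ = diam I.K * I.ratio ^ (n + 1) := by ring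

theorem tendsto_approx (s : ℕ → Bool) : Tendsto (I.approx · s) atTop (𝓝 (I.code s)) := by
  obtain ⟨x, -, hx⟩ :=
    cauchySeq_tendsto_of_isComplete I.isCompact.isComplete (I.approx_mem · s)
    (cauchySeq_of_le_geometric _ _ I.ratio_lt_one (I.dist_approx_succ_le · s))
  exact tendsto_nhds_limUnder ⟨x, hx⟩

theorem code_mem (s : ℕ → Bool) : I.code s ∈ I.K :=
  I.isCompact.isClosed.mem_of_tendsto (I.tendsto_approx s)
    (Eventually.of_forall (I.approx_mem · s))

theorem code_eq_branch (s : ℕ → Bool) : I.code s = I.branch (s 0) (I.code fun k => s (k + 1)) :=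
  tendsto_nhds_unique ((I.tendsto_approx s).comp (tendsto_add_atTop_nat 1))
    (((I.lipschitzWith _).continuous.tendsto _).comp (I.tendsto_approx _))

theorem dist_code_le {s t : ℕ → Bool} {n : ℕ} (hst : t ∈ PiNat.cylinder s n) :
    dist (I.code s) (I.code t) ≤ diam I.K * I.ratio ^ n := by
  induction n generalizing s t with
  | zero =>
    simpa using dist_le_diam_of_mem I.isCompact.isBounded (I.code_mem s) (I.code_mem t)
  | succ n ih =>
    rw [I.code_eq_branch s, I.code_eq_branch t, hst 0 n.succ_pos]
    calc _ ≤ I.ratio * dist (I.code fun k => s (k + 1)) (I.code fun k => t (k + 1)) :=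
          (I.lipschitzWith _).dist_le_mul _ _
      _ ≤ I.ratio * (diam I.K * I.ratio ^ n) := by
          gcongr; exact ih fun i hi => hst (i + 1) (by omega)
      _ = diam I.K * I.ratio ^ (n + 1) := by ring

theorem tendsto_diam_mul_ratio_pow :
    Tendsto (fun n => diam I.K * I.ratio ^ n) atTop (𝓝 0) := by
  simpa using
    (tendsto_pow_atTop_nhds_zero_of_lt_one I.ratio.2 I.ratio_lt_one).const_mul (diam I.K)

theorem continuous_code : Continuous I.code := by
  refine continuous_iff_continuousAt.2 fun s => Metric.tendsto_nhds.2 fun ε hε => ?_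
  obtain ⟨n, hn⟩ := (I.tendsto_diam_mul_ratio_pow.eventually (gt_mem_nhds hε)).exists
  filter_upwards [(PiNat.isOpen_cylinder _ s n).mem_nhds (PiNat.self_mem_cylinder s n)] with t ht
  rw [dist_comm]
  exact (I.dist_code_le ht).trans_lt hn

theorem iterate_code (hσ : ∀ b, LeftInvOn σ (I.branch b) I.K) (n : ℕ) (s : ℕ → Bool) :
    σ^[n] (I.code s) = I.code fun k => s (k + n) := by
  induction n generalizing s with
  | zero => rfl
  | succ n ih =>
    rw [iterate_succ_apply, I.code_eq_branch s, hσ _ (I.code_mem _), ih]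
    simp only [add_assoc]

theorem code_mem_nonEscapingSet (hσ : ∀ b, LeftInvOn σ (I.branch b) I.K) (s : ℕ → Bool) :
    I.code s ∈ nonEscapingSet σ I.K :=
  ⟨I.code_mem s, fun n => I.iterate_code hσ n s ▸ I.code_mem _⟩

theorem itinerary_code (hσ : ∀ b, LeftInvOn σ (I.branch b) I.K)
    (hbit : ∀ b, ∀ y ∈ I.K, bit (I.branch b y) = b) (s : ℕ → Bool) :
    itinerary σ bit (I.code s) = s := by
  funext n
  rw [itinerary, I.iterate_code hσ, I.code_eq_branch, hbit _ _ (I.code_mem _), zero_add]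

theorem code_itinerary (hbranch : ∀ x ∈ I.K, I.branch (bit x) (σ x) = x) {x : X}
    (hx : x ∈ nonEscapingSet σ I.K) : I.code (itinerary σ bit x) = x := by
  have key : ∀ n, ∀ y ∈ nonEscapingSet σ I.K,
      dist (I.code (itinerary σ bit y)) y ≤ diam I.K * I.ratio ^ n := by
    intro n
    induction n with
    | zero =>
      intro y hy
      simpa using dist_le_diam_of_mem I.isCompact.isBounded (I.code_mem _) hy.1
    | succ n ih =>
      intro y hy
      calc dist (I.code (itinerary σ bit y)) y
          = dist (I.branch (bit y) (I.code (itinerary σ bit (σ y))))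
              (I.branch (bit y) (σ y)) := by
            rw [I.code_eq_branch, hbranch y hy.1]; rfl
        _ ≤ I.ratio * dist (I.code (itinerary σ bit (σ y))) (σ y) :=
            (I.lipschitzWith _).dist_le_mul _ _
        _ ≤ I.ratio * (diam I.K * I.ratio ^ n) := by
            gcongr; exact ih _ (mapsTo_nonEscapingSet σ I.K hy)
        _ = diam I.K * I.ratio ^ (n + 1) := by ring
  exact dist_le_zero.1 (ge_of_tendsto' I.tendsto_diam_mul_ratio_pow fun n => key n x hx)

theorem range_code (hσ : ∀ b, LeftInvOn σ (I.branch b) I.K)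
    (hbranch : ∀ x ∈ I.K, I.branch (bit x) (σ x) = x) :
    range I.code = nonEscapingSet σ I.K :=
  (range_subset_iff.2 (I.code_mem_nonEscapingSet hσ)).antisymm fun _ hx =>
    ⟨_, I.code_itinerary hbranch hx⟩

end ContractingPair

noncomputable def gmapInterval (μ : ℝ) : Set ℝ :=
  Icc (1 / (1 + μ) - 1) (1 / (1 + μ))

noncomputable def gmapBranch (μ : ℝ) : Bool → ℝ → ℝ
  | false, y => 1 / (1 + μ) - 1 + (y - (1 / (1 + μ) - 1)) / μ
  | true, y => 1 / (1 + μ) - (y - (1 / (1 + μ) - 1)) / μ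

noncomputable def gmapBit (μ x : ℝ) : Bool :=
  decide (1 / (1 + μ) - 1 / 2 < x)

section gmap

variable {μ : ℝ}

theorem sub_div_mem_Ico_of_mem_gmapInterval (hμ : 2 < μ) {y : ℝ} (hy : y ∈ gmapInterval μ) :
    (y - (1 / (1 + μ) - 1)) / μ ∈ Ico 0 (1 / 2) := by
  obtain ⟨h₀, h₁⟩ := hy
  constructor
  · exact div_nonneg (by linarith) (by linarith)
  · rw [div_lt_iff₀ (by linarith)]; linarith

theorem mapsTo_gmapBranch (hμ : 2 < μ) (b : Bool) :
    MapsTo (gmapBranch μ b) (gmapInterval μ) (gmapInterval μ) := by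
  intro y hy
  have ⟨h₀, h₁⟩ := sub_div_mem_Ico_of_mem_gmapInterval hμ hy
  cases b <;> constructor <;> simp only [gmapBranch] <;> linarith

theorem dist_gmapBranch (hμ : 0 < μ) (b : Bool) (x y : ℝ) :
    dist (gmapBranch μ b x) (gmapBranch μ b y) = μ⁻¹ * dist x y := by
  rw [Real.dist_eq, Real.dist_eq, ← abs_of_pos (inv_pos.2 hμ), ← abs_mul]
  cases b
  · congr 1; simp only [gmapBranch]; ring
  · rw [← abs_neg]; congr 1; simp only [gmapBranch]; ring

theorem gmapBit_gmapBranch (hμ : 2 < μ) (b : Bool) {y : ℝ}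
    (hy : y ∈ gmapInterval μ) : gmapBit μ (gmapBranch μ b y) = b := by
  have ⟨h₀, h₁⟩ := sub_div_mem_Ico_of_mem_gmapInterval hμ hy
  cases b
  · exact decide_eq_false (by simp only [gmapBranch]; linarith)
  · exact decide_eq_true (by simp only [gmapBranch]; linarith)

theorem gmap_of_le {x : ℝ} (hx : x ≤ 1 / (1 + μ) - 1 / 2) :
    gmap μ x = 1 / (1 + μ) - 1 + μ * (1 + x - 1 / (1 + μ)) :=
  if_pos hx

theorem gmap_of_lt {x : ℝ} (hx : 1 / (1 + μ) - 1 / 2 < x) :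
    gmap μ x = 1 / (1 + μ) - 1 + μ * (1 / (1 + μ) - x) :=
  if_neg hx.not_ge

theorem gmap_gmapBranch (hμ : 2 < μ) (b : Bool) :
    LeftInvOn (gmap μ) (gmapBranch μ b) (gmapInterval μ) := by
  intro y hy
  have hbit := gmapBit_gmapBranch hμ b hy
  have : μ ≠ 0 := by positivity
  cases b
  · rw [gmap_of_le (by simpa [gmapBit] using hbit)]; simp only [gmapBranch]; field_simp; ring
  · rw [gmap_of_lt (by simpa [gmapBit] using hbit)]; simp only [gmapBranch]; field_simp; ring

theorem gmapBranch_gmapBit_gmap (hμ : μ ≠ 0) (x : ℝ) :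
    gmapBranch μ (gmapBit μ x) (gmap μ x) = x := by
  rcases le_or_gt x (1 / (1 + μ) - 1 / 2) with hx | hx
  · rw [gmap_of_le hx, gmapBit, decide_eq_false hx.not_gt]
    simp only [gmapBranch]; field_simp; ring
  · rw [gmap_of_lt hx, gmapBit, decide_eq_true hx]
    simp only [gmapBranch]; field_simp; ring

noncomputable def gmapContractingPair (hμ : 2 < μ) : ContractingPair ℝ where
  K := gmapInterval μ
  isCompact := isCompact_Icc
  nonempty := nonempty_Icc.2 (by linarith)
  branch := gmapBranch μ
  mapsTo := mapsTo_gmapBranch hμ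
  ratio := Real.toNNReal μ⁻¹
  ratio_lt_one := Real.toNNReal_lt_one.2 (inv_lt_one_of_one_lt₀ (by linarith))
  lipschitzWith b :=
    LipschitzWith.of_dist_le' fun x y => (dist_gmapBranch (by linarith) b x y).le

end gmap

/-- For `μ > 2`, the set of points of `[ν − 1, ν]` whose forward orbit under `g`
never leaves `[ν − 1, ν]` is a Cantor set: nonempty, compact, perfect, totally
disconnected, and homeomorphic to the Cantor space of binary sequences. -/
theorem gmap_invariant_set_is_cantor (μ : ℝ) (hμ : 2 < μ) (ν : ℝ) (hν : ν = 1 / (1 + μ))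
    (Λ : Set ℝ) (hΛ : Λ = {x ∈ Icc (ν - 1) ν | ∀ n : ℕ, (gmap μ)^[n] x ∈ Icc (ν - 1) ν}) :
    Λ.Nonempty ∧ IsCompact Λ ∧ Perfect Λ ∧ IsTotallyDisconnected Λ ∧
      Nonempty (Λ ≃ₜ (ℕ → Bool)) := by
  subst hν
  set I := gmapContractingPair hμ
  have hrange : range I.code = Λ :=
    hΛ ▸ I.range_code (gmap_gmapBranch hμ) fun x _ => gmapBranch_gmapBit_gmap (by positivity) x
  have hinj : Injective I.code :=
    LeftInverse.injective (I.itinerary_code (gmap_gmapBranch hμ) (gmapBit_gmapBranch hμ))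
  have hemb : IsClosedEmbedding I.code := I.continuous_code.isClosedEmbedding hinj
  subst hrange
  exact ⟨range_nonempty _, isCompact_range I.continuous_code,
    ⟨hemb.isClosed_range, I.continuous_code.preperfect_range hinj⟩,
    hemb.isEmbedding.isTotallyDisconnected_range.2 inferInstance,
    ⟨hemb.isEmbedding.toHomeomorph.symm⟩⟩
end

section
/- The fixed-point set of f in its operating interval consists of exactly three points: a point x ∈ [−μν, μν] satisfies f(x) = x if and only if x = 0, x = ν(1+μ²)/(2μ), or x = −ν(1+μ²)/(2μ). -/
open Set

/-- The piecewise-linear threshold map `f(1,1,·)` of the chaotic NOR gate. -/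
noncomputable def fmap (μ ν : ℝ) : ℝ → ℝ := fun x =>
  if x ≤ -ν then (1 + μ) / (1 - μ) * (x + ν) - μ * ν
  else if x ≤ ν then μ * x
  else (1 + μ) / (1 - μ) * (x - ν) + μ * ν

/-- The fixed-point set of `f` in `[−μν, μν]` consists of exactly three points:
`0` and `±ν(1+μ²)/(2μ)`. -/
theorem fmap_fixed_points (μ ν : ℝ) (hμ : 1 < μ) (hν : 0 < ν) :
    ∀ x ∈ Icc (-(μ * ν)) (μ * ν),
      (fmap μ ν x = x ↔
        x = 0 ∨ x = ν * (1 + μ ^ 2) / (2 * μ) ∨ x = -(ν * (1 + μ ^ 2) / (2 * μ))) := by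
  intro x hx
  have hμ0 : (0:ℝ) < μ := by linarith
  have h1μ : (1:ℝ) - μ ≠ 0 := by intro h; linarith
  have h2μ : (2:ℝ) * μ ≠ 0 := by positivity
  have hcand : ν < ν * (1 + μ ^ 2) / (2 * μ) := by
    rw [lt_div_iff₀ (by positivity)]
    nlinarith [mul_pos hν (pow_pos (by linarith : (0:ℝ) < μ - 1) 2)]
  unfold fmap
  split_ifs with h1 h2
  · constructor
    · intro h
      right; right
      field_simp at h ⊢
      nlinarith [h]
    · rintro (rfl | rfl | rfl)
      · linarith
      · linarith
      · field_simp
        ring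
  · constructor
    · intro h
      left
      have : (μ - 1) * x = 0 := by linarith
      rcases mul_eq_zero.mp this with h' | h'
      · exfalso; linarith
      · exact h'
    · rintro (rfl | rfl | rfl)
      · ring
      · linarith
      · exfalso
        push_neg at h1
        linarith
  · constructor
    · intro h
      right; left
      field_simp at h ⊢
      nlinarith [h]
    · rintro (rfl | rfl | rfl)
      · push_neg at h2; linarith
      · field_simp
        ring
      · push_neg at h1; linarith
end

section
/- The map f has a periodic orbit of exact period 3: there exists x ∈ [−μν, μν] with f³(x) = x and f(x) ≠ x. -/
open Set

/-- `f` has a periodic orbit of exact period 3 in `[−μν, μν]`. -/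
theorem fmap_exists_period_three (μ ν : ℝ) (hμ : 1 < μ) (hν : 0 < ν) :
    ∃ x ∈ Icc (-(μ * ν)) (μ * ν), (fmap μ ν)^[3] x = x ∧ fmap μ ν x ≠ x := by
  set d : ℝ := μ^3 + μ^2 + μ - 1 with hd_def
  have hd : 0 < d := by nlinarith
  set x : ℝ := ν * (1 + μ^2) / d with hx_def
  have hx0 : 0 < x := by positivity
  have hxν : x < ν := by
    rw [hx_def, div_lt_iff₀ hd]
    nlinarith [mul_pos hν (show (0:ℝ) < d - (1 + μ^2) by nlinarith)]
  have hμxν : μ * x < ν := by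
    rw [hx_def, mul_div_assoc', div_lt_iff₀ hd]
    nlinarith [mul_pos hν (show (0:ℝ) < d - (μ + μ^3) by nlinarith)]
  have hμ2x : ν < μ^2 * x := by
    rw [hx_def, mul_div_assoc', lt_div_iff₀ hd]
    nlinarith [mul_pos hν (show (0:ℝ) < μ^2 * (1 + μ^2) - d by nlinarith [mul_pos (sub_pos.2 hμ) (show (0:ℝ) < μ^3 - 1 by nlinarith)])]
  have h1 : fmap μ ν x = μ * x := by
    unfold fmap
    rw [if_neg (by linarith), if_pos (by linarith)]
  have h2 : fmap μ ν (μ * x) = μ^2 * x := by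
    unfold fmap
    rw [if_neg (by nlinarith), if_pos (by linarith)]
    ring
  have h3 : fmap μ ν (μ^2 * x) = x := by
    unfold fmap
    rw [if_neg (by nlinarith), if_neg (by linarith)]
    have h1μ : (1 : ℝ) - μ ≠ 0 := by linarith
    rw [hx_def]
    field_simp
    ring
  refine ⟨x, ⟨by nlinarith, by nlinarith⟩, ?_, ?_⟩
  · show fmap μ ν (fmap μ ν (fmap μ ν x)) = x
    rw [h1, h2, h3]
  · rw [h1]
    intro h
    nlinarith
end

section
/- For every positive integer n there exists a periodic point pₙ ∈ [−μν, μν] of f having least period n: fⁿ(pₙ) = pₙ and fᵏ(pₙ) ≠ pₙ for every integer k with 0 < k < n. -/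
open Set

/-!
On `[-ν, ν]` the map is multiplication by `μ > 1`, and beyond `ν` the decreasing outer branch
sends points back towards `0`. So for a suitable `p > 0` the orbit `p, μ p, …, μ^(n-1) p` stays
in the linear region until `μ^(n-1) p ∈ (ν, μν)`, which the outer branch sends back to `p`.
The earlier iterates `μ^k p` exceed `p`, so the period `n` is least.
-/

namespace fmap

variable {μ ν : ℝ}

theorem eq_mul_of_mem_Icc {x : ℝ} (hx : x ∈ Icc (-ν) ν) : fmap μ ν x = μ * x := by
  by_cases hxl : x ≤ -ν
  · obtain rfl : x = -ν := le_antisymm hxl hx.1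
    simp [fmap]
  · simp [fmap, hxl, hx.2]

theorem eq_of_lt (hν : 0 ≤ ν) {x : ℝ} (hx : ν < x) :
    fmap μ ν x = (1 + μ) / (1 - μ) * (x - ν) + μ * ν := by
  have hxν : ¬ x ≤ ν := not_le.2 hx
  have hxl : ¬ x ≤ -ν := by linarith
  simp only [fmap, hxl, hxν, if_false]

theorem iterate_eq_pow_mul {x : ℝ} {k : ℕ} (h : ∀ j < k, μ ^ j * x ∈ Icc (-ν) ν) :
    (fmap μ ν)^[k] x = μ ^ k * x := by
  induction k with
  | zero => simp
  | succ k ih =>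
    rw [Function.iterate_succ_apply', ih fun j hj => h j (by omega),
      eq_mul_of_mem_Icc (h k k.lt_succ_self), pow_succ']
    ring

/-- The solution `p` of `f (μ^m p) = p` on the outer branch `x > ν`. -/
noncomputable def cycleStart (μ ν : ℝ) (m : ℕ) : ℝ :=
  ν * (1 + μ ^ 2) / (μ ^ m * (1 + μ) + μ - 1)

theorem cycleStart_denom_pos (hμ : 1 < μ) (m : ℕ) : 0 < μ ^ m * (1 + μ) + μ - 1 := by
  have : 0 < μ ^ m := pow_pos (by linarith) m
  nlinarith

theorem cycleStart_pos (hμ : 1 < μ) (hν : 0 < ν) (m : ℕ) : 0 < cycleStart μ ν m :=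
  div_pos (by positivity) (cycleStart_denom_pos hμ m)

theorem lt_pow_mul_cycleStart (hμ : 1 < μ) (hν : 0 < ν) (m : ℕ) :
    ν < μ ^ m * cycleStart μ ν m := by
  have hpow : 1 < μ * μ ^ m := by simpa only [pow_succ'] using one_lt_pow₀ hμ m.succ_ne_zero
  rw [cycleStart, mul_div_assoc', lt_div_iff₀ (cycleStart_denom_pos hμ m)]
  nlinarith [mul_pos (mul_pos hν (sub_pos.2 hμ)) (sub_pos.2 hpow)]

theorem pow_mul_cycleStart_lt (hμ : 1 < μ) (hν : 0 < ν) (m : ℕ) :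
    μ ^ m * cycleStart μ ν m < μ * ν := by
  have hμm : 0 < μ ^ m := pow_pos (by linarith) m
  rw [cycleStart, mul_div_assoc', div_lt_iff₀ (cycleStart_denom_pos hμ m)]
  nlinarith [mul_pos hν (mul_pos hμm (sub_pos.2 hμ)),
    mul_pos hν (mul_pos (by linarith : 0 < μ) (sub_pos.2 hμ))]

theorem apply_pow_mul_cycleStart (hμ : 1 < μ) (hν : 0 < ν) (m : ℕ) :
    fmap μ ν (μ ^ m * cycleStart μ ν m) = cycleStart μ ν m := by
  have h1μ : 1 - μ ≠ 0 := by linarith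
  have hp : cycleStart μ ν m * (μ ^ m * (1 + μ) + μ - 1) = ν * (1 + μ ^ 2) :=
    div_mul_cancel₀ _ (cycleStart_denom_pos hμ m).ne'
  rw [eq_of_lt hν.le (lt_pow_mul_cycleStart hμ hν m), div_mul_eq_mul_div, div_add' _ _ _ h1μ,
    div_eq_iff h1μ]
  linear_combination hp

theorem pow_mul_cycleStart_mem_Icc (hμ : 1 < μ) (hν : 0 < ν) {m j : ℕ} (hj : j < m) :
    μ ^ j * cycleStart μ ν m ∈ Icc (-ν) ν := by
  have hp := cycleStart_pos hμ hν m
  have hμj : 0 < μ ^ j := pow_pos (by linarith) j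
  have hle : μ * μ ^ j ≤ μ ^ m := by simpa only [pow_succ'] using pow_le_pow_right₀ hμ.le hj
  have hlt := pow_mul_cycleStart_lt hμ hν m
  constructor <;> nlinarith

end fmap

/-- For every positive integer `n`, `f` has a periodic point in `[−μν, μν]` of
least period `n`. -/
theorem fmap_exists_least_period (μ ν : ℝ) (hμ : 1 < μ) (hν : 0 < ν) :
    ∀ n : ℕ, 0 < n →
      ∃ p ∈ Icc (-(μ * ν)) (μ * ν),
        (fmap μ ν)^[n] p = p ∧
        ∀ k : ℕ, 0 < k → k < n → (fmap μ ν)^[k] p ≠ p := by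
  open fmap in
  intro n hn
  obtain ⟨m, rfl⟩ : ∃ m, n = m + 1 := ⟨n - 1, by omega⟩
  set p := cycleStart μ ν m
  have hp : 0 < p := cycleStart_pos hμ hν m
  have horbit : ∀ k ≤ m, (fmap μ ν)^[k] p = μ ^ k * p := fun k hk =>
    iterate_eq_pow_mul fun j hj => pow_mul_cycleStart_mem_Icc hμ hν (by omega)
  have hp_le : p ≤ μ ^ m * p := le_mul_of_one_le_left hp.le (one_le_pow₀ hμ.le)
  refine ⟨p, ⟨by nlinarith, hp_le.trans (pow_mul_cycleStart_lt hμ hν m).le⟩, ?_, ?_⟩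
  · rw [Function.iterate_succ_apply', horbit m le_rfl, apply_pow_mul_cycleStart hμ hν m]
  · intro k hk0 hkn
    rw [horbit k (by omega)]
    exact (lt_mul_of_one_lt_left hp (one_lt_pow₀ hμ hk0.ne')).ne'
end
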